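/- arXiv:1312.5598 — 4 statements merged into one kernel-verified Lean document; each statement's English description precedes it below -/
import Mathlib

section
/- Let G = (V,E) be a finite simple undirected connected graph. Then ν̄_G ≠ ν̂_G if and only if ν̄_G < 0. -/
open Finset

variable {V : Type*}

/-- `N(T)`: the set of vertices adjacent to at least one vertex of `T`. -/
def nbhd [Fintype V] [DecidableEq V] (G : SimpleGraph V) [DecidableRel G.Adj]
    (T : Finset V) : Finset V :=
  Finset.univ.filter fun j => ∃ i ∈ T, G.Adj i j

/-- The vulnerability function `v_G(T) = |T| - |N(T)|`. -/
def vuln [Fintype V] [DecidableEq V] (G : SimpleGraph V) [DecidableRel G.Adj]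
    (T : Finset V) : ℤ :=
  (T.card : ℤ) - ((nbhd G T).card : ℤ)

/-- `S` is an independent set of `G`. -/
def IsIndepF (G : SimpleGraph V) (S : Finset V) : Prop :=
  ∀ i ∈ S, ∀ j ∈ S, ¬ G.Adj i j

/-! Deleting from `T` the vertices of `N(T)` leaves an independent set `S` with
`N(S) ⊆ N(T) \ T`: a neighbour of `S` lying in `T` would put its neighbour in `S` into `N(T)`.
Hence `v(T) ≤ v(S)`, so the maximum of `v` over all sets is attained at an independent set or at
`∅`, that is `ν̂ = max ν̄ 0`. -/

section

variable [Fintype V] [DecidableEq V] (G : SimpleGraph V) [DecidableRel G.Adj]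

lemma mem_nbhd {T : Finset V} {j : V} : j ∈ nbhd G T ↔ ∃ i ∈ T, G.Adj i j := by
  simp [nbhd]

@[simp]
lemma vuln_empty : vuln G ∅ = 0 := by
  simp [vuln, nbhd]

lemma isIndepF_sdiff_nbhd (T : Finset V) : IsIndepF G (T \ nbhd G T) := by
  intro i hi j hj hij
  exact (mem_sdiff.1 hj).2 ((mem_nbhd G).2 ⟨i, (mem_sdiff.1 hi).1, hij⟩)

lemma nbhd_sdiff_nbhd_subset (T : Finset V) : nbhd G (T \ nbhd G T) ⊆ nbhd G T \ T := by
  intro j hj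
  obtain ⟨i, hi, hij⟩ := (mem_nbhd G).1 hj
  obtain ⟨hiT, hiN⟩ := mem_sdiff.1 hi
  refine mem_sdiff.2 ⟨(mem_nbhd G).2 ⟨i, hiT, hij⟩, fun hjT => hiN ?_⟩
  exact (mem_nbhd G).2 ⟨j, hjT, hij.symm⟩

lemma vuln_le_vuln_sdiff_nbhd (T : Finset V) : vuln G T ≤ vuln G (T \ nbhd G T) := by
  have hN := card_le_card (nbhd_sdiff_nbhd_subset G T)
  have hT := card_sdiff_add_card_inter T (nbhd G T)
  have hNT := card_sdiff_add_card_inter (nbhd G T) T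
  rw [inter_comm] at hNT
  unfold vuln
  omega

lemma weakVulnerability_eq_max {nuBar nuHat : ℤ}
    (hBar : IsGreatest {x : ℤ | ∃ S : Finset V, S.Nonempty ∧ IsIndepF G S ∧ vuln G S = x} nuBar)
    (hHat : IsGreatest {x : ℤ | ∃ T : Finset V, vuln G T = x} nuHat) :
    nuHat = max nuBar 0 := by
  refine le_antisymm ?_ (max_le ?_ (hHat.2 ⟨∅, vuln_empty G⟩))
  · obtain ⟨T, rfl⟩ := hHat.1
    refine (vuln_le_vuln_sdiff_nbhd G T).trans ?_
    rcases (T \ nbhd G T).eq_empty_or_nonempty with hS | hS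
    · simp [hS]
    · exact le_max_of_le_left (hBar.2 ⟨_, hS, isIndepF_sdiff_nbhd G T, rfl⟩)
  · obtain ⟨S, -, -, rfl⟩ := hBar.1
    exact hHat.2 ⟨S, rfl⟩

end

theorem vulnerability_ne_weakVulnerability_iff_neg_general
    [Fintype V] [DecidableEq V] (G : SimpleGraph V) [DecidableRel G.Adj]
    (nuBar nuHat : ℤ)
    (hBar : IsGreatest {x : ℤ | ∃ S : Finset V, S.Nonempty ∧ IsIndepF G S ∧ vuln G S = x} nuBar)
    (hHat : IsGreatest {x : ℤ | ∃ T : Finset V, vuln G T = x} nuHat) :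
    nuBar ≠ nuHat ↔ nuBar < 0 := by
  rw [weakVulnerability_eq_max G hBar hHat]
  omega

/-- For a finite simple undirected connected graph `G`,
`ν̄_G ≠ ν̂_G` if and only if `ν̄_G < 0`, where `ν̄_G` is the maximum of `v_G` over nonempty
independent sets and `ν̂_G` is the maximum of `v_G` over all subsets of `V`. -/
theorem vulnerability_ne_weakVulnerability_iff_neg
    [Fintype V] [DecidableEq V] (G : SimpleGraph V) [DecidableRel G.Adj]
    (hconn : G.Connected) (nuBar nuHat : ℤ)
    (hBar : IsGreatest {x : ℤ | ∃ S : Finset V, S.Nonempty ∧ IsIndepF G S ∧ vuln G S = x} nuBar)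
    (hHat : IsGreatest {x : ℤ | ∃ T : Finset V, vuln G T = x} nuHat) :
    nuBar ≠ nuHat ↔ nuBar < 0 :=
  vulnerability_ne_weakVulnerability_iff_neg_general G nuBar nuHat hBar hHat
end

section
/- Let G = (V,E) be a finite simple undirected connected graph. Then p̄_G = ν̂_G and q̄_G = ν̄_G, where p̄_G = max over all T ⊆ V of p_G(T), q̄_G = max over all T ⊆ V with S(T) ≠ ∅ of q_G(T), ν̂_G = max over all T ⊆ V of v_G(T), and ν̄_G = max over nonempty independent sets S of v_G(S). -/
/-! Since `B(T)` is the complement of `N(V \ T)`, the map `T ↦ V \ T` turns `p_G` into `v_G`.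
For `q_G`: the set `S(T)` is independent with `N(S(T)) ⊆ T`, so `q_G(T) ≤ v_G(S(T))`; conversely
an independent set `S` lies in `S(N(S))`, so `v_G(S) ≤ q_G(N(S))`. -/

open Finset

variable {V : Type*}

/-- `B(T) = {i ∈ V : N({i}) ⊆ T}`: the set of vertices all of whose neighbors lie in `T`. -/
def bset [Fintype V] [DecidableEq V] (G : SimpleGraph V) [DecidableRel G.Adj]
    (T : Finset V) : Finset V :=
  Finset.univ.filter fun i => ∀ j, G.Adj i j → j ∈ T

/-- `S(T) = B(T) \ T`. -/
def sset [Fintype V] [DecidableEq V] (G : SimpleGraph V) [DecidableRel G.Adj]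
    (T : Finset V) : Finset V :=
  bset G T \ T

/-- The power function `p_G(T) = |B(T)| - |T|`. -/
def powerP [Fintype V] [DecidableEq V] (G : SimpleGraph V) [DecidableRel G.Adj]
    (T : Finset V) : ℤ :=
  ((bset G T).card : ℤ) - (T.card : ℤ)

/-- The power function `q_G(T) = |S(T)| - |T|`. -/
def powerQ [Fintype V] [DecidableEq V] (G : SimpleGraph V) [DecidableRel G.Adj]
    (T : Finset V) : ℤ :=
  ((sset G T).card : ℤ) - (T.card : ℤ)

theorem IsGreatest.eq_of_forall_exists_le {α : Type*} [PartialOrder α] {s t : Set α} {a b : α}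
    (ha : IsGreatest s a) (hb : IsGreatest t b) (hst : ∀ x ∈ s, ∃ y ∈ t, x ≤ y)
    (hts : ∀ y ∈ t, ∃ x ∈ s, y ≤ x) : a = b := by
  obtain ⟨y, hy, hay⟩ := hst a ha.1
  obtain ⟨x, hx, hbx⟩ := hts b hb.1
  exact le_antisymm (hay.trans (hb.2 hy)) (hbx.trans (ha.2 hx))

section

variable [Fintype V] [DecidableEq V] (G : SimpleGraph V) [DecidableRel G.Adj]

theorem bset_eq_compl_nbhd_compl (T : Finset V) : bset G T = (nbhd G Tᶜ)ᶜ := by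
  ext i
  simp only [bset, nbhd, mem_filter, mem_univ, true_and, mem_compl, not_exists, not_and]
  exact ⟨fun h j hj hadj => hj (h j hadj.symm),
    fun h j hadj => by_contra fun hj => h j hj hadj.symm⟩

theorem powerP_eq_vuln_compl (T : Finset V) : powerP G T = vuln G Tᶜ := by
  have hN := card_le_univ (nbhd G Tᶜ)
  have hT := card_le_univ T
  rw [powerP, vuln, bset_eq_compl_nbhd_compl, card_compl, card_compl]
  omega

theorem isIndepF_sset (T : Finset V) : IsIndepF G (sset G T) := by
  intro i hi j hj hadj
  simp only [sset, mem_sdiff, bset, mem_filter, mem_univ, true_and] at hi hj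
  exact hj.2 (hi.1 j hadj)

theorem nbhd_sset_subset (T : Finset V) : nbhd G (sset G T) ⊆ T := by
  intro j hj
  simp only [nbhd, sset, mem_sdiff, bset, mem_filter, mem_univ, true_and] at hj
  obtain ⟨i, hi, hadj⟩ := hj
  exact hi.1 j hadj

theorem subset_sset_nbhd {S : Finset V} (hS : IsIndepF G S) : S ⊆ sset G (nbhd G S) := by
  intro i hi
  simp only [sset, mem_sdiff, bset, nbhd, mem_filter, mem_univ, true_and]
  refine ⟨fun j hadj => ⟨i, hi, hadj⟩, ?_⟩
  rintro ⟨k, hk, hadj⟩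
  exact hS k hk i hi hadj

theorem powerQ_le_vuln_sset (T : Finset V) : powerQ G T ≤ vuln G (sset G T) := by
  have := card_le_card (nbhd_sset_subset G T)
  rw [powerQ, vuln]
  omega

theorem vuln_le_powerQ_nbhd {S : Finset V} (hS : IsIndepF G S) :
    vuln G S ≤ powerQ G (nbhd G S) := by
  have := card_le_card (subset_sset_nbhd G hS)
  rw [powerQ, vuln]
  omega

end

theorem power_eq_vulnerability_general
    [Fintype V] [DecidableEq V] (G : SimpleGraph V) [DecidableRel G.Adj]
    (pBar qBar nuHat nuBar : ℤ)
    (hp : IsGreatest {x : ℤ | ∃ T : Finset V, powerP G T = x} pBar)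
    (hq : IsGreatest {x : ℤ | ∃ T : Finset V, (sset G T).Nonempty ∧ powerQ G T = x} qBar)
    (hHat : IsGreatest {x : ℤ | ∃ T : Finset V, vuln G T = x} nuHat)
    (hBar : IsGreatest {x : ℤ | ∃ S : Finset V, S.Nonempty ∧ IsIndepF G S ∧ vuln G S = x}
      nuBar) :
    pBar = nuHat ∧ qBar = nuBar := by
  constructor
  · refine hp.eq_of_forall_exists_le hHat ?_ ?_
    · rintro _ ⟨T, rfl⟩
      exact ⟨_, ⟨Tᶜ, rfl⟩, (powerP_eq_vuln_compl G T).le⟩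
    · rintro _ ⟨T, rfl⟩
      exact ⟨_, ⟨Tᶜ, rfl⟩, by rw [powerP_eq_vuln_compl, compl_compl]⟩
  · refine hq.eq_of_forall_exists_le hBar ?_ ?_
    · rintro _ ⟨T, hne, rfl⟩
      exact ⟨_, ⟨sset G T, hne, isIndepF_sset G T, rfl⟩, powerQ_le_vuln_sset G T⟩
    · rintro _ ⟨S, hne, hS, rfl⟩
      exact ⟨_, ⟨nbhd G S, hne.mono (subset_sset_nbhd G hS), rfl⟩, vuln_le_powerQ_nbhd G hS⟩

/-- For a finite simple undirected connected graph `G`, `p̄_G = ν̂_G` and `q̄_G = ν̄_G`, where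
`p̄_G` is the maximum of `p_G` over all subsets, `q̄_G` is the maximum of `q_G` over all
subsets `T` with `S(T) ≠ ∅`, `ν̂_G` is the maximum of `v_G` over all subsets, and `ν̄_G` is
the maximum of `v_G` over nonempty independent sets. -/
theorem power_eq_vulnerability
    [Fintype V] [DecidableEq V] (G : SimpleGraph V) [DecidableRel G.Adj]
    (hconn : G.Connected) (pBar qBar nuHat nuBar : ℤ)
    (hp : IsGreatest {x : ℤ | ∃ T : Finset V, powerP G T = x} pBar)
    (hq : IsGreatest {x : ℤ | ∃ T : Finset V, (sset G T).Nonempty ∧ powerQ G T = x} qBar)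
    (hHat : IsGreatest {x : ℤ | ∃ T : Finset V, vuln G T = x} nuHat)
    (hBar : IsGreatest {x : ℤ | ∃ S : Finset V, S.Nonempty ∧ IsIndepF G S ∧ vuln G S = x}
      nuBar) :
    pBar = nuHat ∧ qBar = nuBar :=
  power_eq_vulnerability_general G pBar qBar nuHat nuBar hp hq hHat hBar
end

section
/- Let G = (V,E) be a finite simple undirected connected graph with at least two vertices and let n = |V|. For each i ∈ V, the Shapley value of i in the coalitional game (V, p_G) equals φᵖ_i = -1 + Σ_{j adjacent to i} 1/d_j, where d_j is the degree of vertex j. That is, (1/n!) · Σ over all orderings L of V of (p_G(T_L(i) ∪ {i}) - p_G(T_L(i))) = -1 + Σ_{j ∈ N({i})} 1/d_j, where T_L(i) is the set of vertices preceding i in the ordering L. -/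
/-!
Adding `i` to its set of predecessors `T` costs `1` in `|T|` and gains exactly the neighbours `j`
of `i` with `N(j) ⊆ T ∪ {i}`, i.e. those `j` for which `i` is the last vertex of `N(j)` in the
ordering. Transposing two vertices of `N(j)` shows that each of them is last in equally many
orderings, so `i` is last in a fraction `1 / d_j` of them.
-/


open Finset

variable {V : Type*}

/-- `T_L(i)`: the set of vertices preceding `i` in the ordering `L` of the vertices. -/
def precSet [Fintype V] [DecidableEq V] (L : V ≃ Fin (Fintype.card V)) (i : V) : Finset V :=
  Finset.univ.filter fun k => L k < L i

section Orderings

variable {α β : Type*} [DecidableEq α] [LinearOrder β]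

lemma forall_le_swap_trans {A : Finset α} {a b : α} (ha : a ∈ A) (hb : b ∈ A) {L : α ≃ β}
    (hL : ∀ k ∈ A, L k ≤ L a) :
    ∀ k ∈ A, (Equiv.swap a b).trans L k ≤ (Equiv.swap a b).trans L b := by
  intro k hk
  rw [Equiv.trans_apply, Equiv.trans_apply, Equiv.swap_apply_right]
  apply hL
  rw [Equiv.swap_apply_def]
  split_ifs <;> assumption

variable [Fintype α] [Fintype β]

lemma card_filter_forall_le_eq {A : Finset α} {a b : α} (ha : a ∈ A) (hb : b ∈ A) :
    #{L : α ≃ β | ∀ k ∈ A, L k ≤ L a} = #{L : α ≃ β | ∀ k ∈ A, L k ≤ L b} := by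
  have hinv : ∀ L : α ≃ β, (Equiv.swap a b).trans ((Equiv.swap a b).trans L) = L := fun L => by
    ext; simp
  refine card_nbij' ((Equiv.swap a b).trans ·) ((Equiv.swap a b).trans ·) ?_ ?_
    (fun L _ => hinv L) (fun L _ => hinv L)
  · intro L hL
    simp only [coe_filter, mem_univ, true_and, Set.mem_ofPred_eq] at hL ⊢
    exact forall_le_swap_trans ha hb hL
  · intro L hL
    simp only [coe_filter, mem_univ, true_and, Set.mem_ofPred_eq] at hL ⊢
    rw [Equiv.swap_comm]
    exact forall_le_swap_trans hb ha hL

theorem card_mul_card_filter_forall_le {A : Finset α} {i : α} (hi : i ∈ A) :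
    #A * #{L : α ≃ β | ∀ k ∈ A, L k ≤ L i} = Fintype.card (α ≃ β) := by
  have hcover : (A.biUnion fun a => {L | ∀ k ∈ A, L k ≤ L a}) = (univ : Finset (α ≃ β)) := by
    refine eq_univ_of_forall fun L => ?_
    obtain ⟨a, ha, hmax⟩ := A.exists_max_image L ⟨i, hi⟩
    exact mem_biUnion.2 ⟨a, ha, mem_filter.2 ⟨mem_univ _, hmax⟩⟩
  have hdisj : (A : Set α).PairwiseDisjoint
      fun a => ({L | ∀ k ∈ A, L k ≤ L a} : Finset (α ≃ β)) := by
    intro a ha b hb hab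
    refine disjoint_filter.2 fun (L : α ≃ β) _ hLa hLb => hab (L.injective ?_)
    exact le_antisymm (hLb a ha) (hLa b hb)
  calc #A * #{L : α ≃ β | ∀ k ∈ A, L k ≤ L i}
      = ∑ a ∈ A, #{L : α ≃ β | ∀ k ∈ A, L k ≤ L a} := by
        rw [sum_congr rfl fun a ha => card_filter_forall_le_eq ha hi, sum_const, smul_eq_mul]
    _ = Fintype.card (α ≃ β) := by rw [← card_biUnion hdisj, hcover, card_univ]

end Orderings

section PowerFunction

variable [Fintype V] [DecidableEq V] (G : SimpleGraph V) [DecidableRel G.Adj]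

lemma mem_bset {T : Finset V} {j : V} : j ∈ bset G T ↔ G.neighborFinset j ⊆ T := by
  simp [bset, subset_iff]

lemma bset_mono : Monotone (bset G) := fun _ _ hST _ => by
  simpa only [mem_bset] using fun h => h.trans hST

lemma bset_union_singleton_sdiff {T : Finset V} {i : V} (hi : i ∉ T) :
    bset G (T ∪ {i}) \ bset G T = {j ∈ G.neighborFinset i | G.neighborFinset j ⊆ T ∪ {i}} := by
  ext j
  simp only [mem_sdiff, mem_bset, mem_filter, SimpleGraph.mem_neighborFinset]
  constructor
  · rintro ⟨hsub, hnot⟩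
    obtain ⟨k, hkj, hkT⟩ := not_subset.1 hnot
    have hki : k = i := by simpa [hkT] using hsub hkj
    rw [hki, SimpleGraph.mem_neighborFinset] at hkj
    exact ⟨hkj.symm, hsub⟩
  · rintro ⟨hij, hsub⟩
    refine ⟨hsub, fun h => hi (h ?_)⟩
    simpa using hij.symm

lemma powerP_union_singleton_sub {T : Finset V} {i : V} (hi : i ∉ T) :
    powerP G (T ∪ {i}) - powerP G T =
      #{j ∈ G.neighborFinset i | G.neighborFinset j ⊆ T ∪ {i}} - 1 := by
  have hcard := card_sdiff_add_card_eq_card (bset_mono G (T.subset_union_left (s₂ := {i})))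
  rw [bset_union_singleton_sdiff G hi] at hcard
  simp only [powerP, card_union_of_disjoint (disjoint_singleton_right.2 hi), card_singleton]
  omega

end PowerFunction

section Shapley

variable [Fintype V] [DecidableEq V]

lemma self_notMem_precSet (L : V ≃ Fin (Fintype.card V)) (i : V) : i ∉ precSet L i := by
  simp [precSet]

lemma precSet_union_singleton (L : V ≃ Fin (Fintype.card V)) (i : V) :
    precSet L i ∪ {i} = ({k | L k ≤ L i} : Finset V) := by
  ext k
  simp [precSet, le_iff_lt_or_eq, L.injective.eq_iff, or_comm]

lemma powerP_marginal_precSet (G : SimpleGraph V) [DecidableRel G.Adj]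
    (L : V ≃ Fin (Fintype.card V)) (i : V) :
    powerP G (precSet L i ∪ {i}) - powerP G (precSet L i) =
      #{j ∈ G.neighborFinset i | ∀ k ∈ G.neighborFinset j, L k ≤ L i} - 1 := by
  rw [powerP_union_singleton_sub G (self_notMem_precSet L i), precSet_union_singleton]
  simp only [subset_iff, mem_filter, mem_univ, true_and]

lemma card_orderings_neighborFinset_le (G : SimpleGraph V) [DecidableRel G.Adj] {i j : V}
    (hij : G.Adj i j) :
    (#{L : V ≃ Fin (Fintype.card V) | ∀ k ∈ G.neighborFinset j, L k ≤ L i} : ℝ) =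
      (Fintype.card V).factorial / G.degree j := by
  have hcount := card_mul_card_filter_forall_le (β := Fin (Fintype.card V))
    ((G.mem_neighborFinset j i).2 hij.symm)
  rw [Fintype.card_equiv (Fintype.equivFin V), G.card_neighborFinset_eq_degree] at hcount
  have hdeg : (G.degree j : ℝ) ≠ 0 := by
    exact_mod_cast ((G.degree_pos_iff_exists_adj j).2 ⟨i, hij.symm⟩).ne'
  rw [eq_div_iff hdeg, ← hcount]
  push_cast
  ring

end Shapley

theorem shapley_powerP_general
    [Fintype V] [DecidableEq V] (G : SimpleGraph V) [DecidableRel G.Adj] (i : V) :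
    (1 / ((Fintype.card V).factorial : ℝ)) *
        ∑ L : V ≃ Fin (Fintype.card V),
          ((powerP G (precSet L i ∪ {i}) : ℝ) - (powerP G (precSet L i) : ℝ)) =
      -1 + ∑ j ∈ G.neighborFinset i, (1 : ℝ) / (G.degree j : ℝ) := by
  have hdouble : ∑ L : V ≃ Fin (Fintype.card V),
      #{j ∈ G.neighborFinset i | ∀ k ∈ G.neighborFinset j, L k ≤ L i} =
      ∑ j ∈ G.neighborFinset i,
        #{L : V ≃ Fin (Fintype.card V) | ∀ k ∈ G.neighborFinset j, L k ≤ L i} :=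
    sum_card_bipartiteAbove_eq_sum_card_bipartiteBelow _
  have hfac : ((Fintype.card V).factorial : ℝ) ≠ 0 := by positivity
  calc (1 / ((Fintype.card V).factorial : ℝ)) *
        ∑ L : V ≃ Fin (Fintype.card V),
          ((powerP G (precSet L i ∪ {i}) : ℝ) - (powerP G (precSet L i) : ℝ))
      = (1 / ((Fintype.card V).factorial : ℝ)) *
          (∑ j ∈ G.neighborFinset i,
            (#{L : V ≃ Fin (Fintype.card V) | ∀ k ∈ G.neighborFinset j, L k ≤ L i} : ℝ) -
            (Fintype.card V).factorial) := by
        simp_rw [← Int.cast_sub, powerP_marginal_precSet]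
        push_cast
        rw [sum_sub_distrib, ← Nat.cast_sum, hdouble]
        simp [Fintype.card_equiv (Fintype.equivFin V)]
    _ = -1 + ∑ j ∈ G.neighborFinset i, (1 : ℝ) / (G.degree j : ℝ) := by
        rw [sum_congr rfl fun j hj =>
          card_orderings_neighborFinset_le G ((G.mem_neighborFinset i j).1 hj)]
        rw [mul_sub, mul_sum, one_div_mul_cancel hfac, neg_add_eq_sub]
        exact congrArg (· - 1) (sum_congr rfl fun j _ => by field_simp)

/-- Let `G` be a finite simple undirected connected graph with at least two vertices and
`n = |V|`. For each vertex `i`, the Shapley value of `i` in the coalitional game `(V, p_G)`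
equals `φᵖ_i = -1 + Σ_{j adjacent to i} 1/d_j`. -/
theorem shapley_powerP
    [Fintype V] [DecidableEq V] (G : SimpleGraph V) [DecidableRel G.Adj]
    (hconn : G.Connected) (hcard : 2 ≤ Fintype.card V) (i : V) :
    (1 / ((Fintype.card V).factorial : ℝ)) *
        ∑ L : V ≃ Fin (Fintype.card V),
          ((powerP G (precSet L i ∪ {i}) : ℝ) - (powerP G (precSet L i) : ℝ)) =
      -1 + ∑ j ∈ G.neighborFinset i, (1 : ℝ) / (G.degree j : ℝ) :=
  shapley_powerP_general G i
end

section
/- Let G = (V,E) be a finite simple undirected connected graph with at least two vertices, so every vertex has degree d_i ≥ 1. Then the vector φᵖ with components φᵖ_i = -1 + Σ_{j adjacent to i} 1/d_j belongs to the core of the game (V, p_G): for every coalition T ⊆ V, Σ_{i∈T} φᵖ_i ≥ p_G(T), equivalently Σ_{i∈T} Σ_{j ∈ N({i})} 1/d_j ≥ |B(T)|. -/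
open Finset

variable {V : Type*}

/-
By double counting, `Σ_{i ∈ T} Σ_{j ∈ N({i})} 1/d_j` adds up, over all vertices `j`, the
fraction `|T ∩ N({j})| / d_j` of the neighbours of `j` lying in `T`. Each vertex of `B(T)` has
all its `d_j ≥ 1` neighbours in `T`, so it contributes exactly `1`, and every other vertex
contributes something nonnegative.
-/

namespace SimpleGraph

variable [Fintype V] (G : SimpleGraph V) [DecidableRel G.Adj]

theorem sum_sum_neighborFinset_eq_sum_card_inter_smul [DecidableEq V] {M : Type*}
    [AddCommMonoid M] (T : Finset V) (f : V → M) :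
    ∑ i ∈ T, ∑ j ∈ G.neighborFinset i, f j = ∑ j, #(T ∩ G.neighborFinset j) • f j := by
  rw [sum_comm' (t' := univ) (s' := fun j => T ∩ G.neighborFinset j)]
  · simp only [sum_const]
  · simp [G.adj_comm]

theorem neighborFinset_subset_of_mem_bset [DecidableEq V] {T : Finset V} {j : V}
    (hj : j ∈ bset G T) : G.neighborFinset j ⊆ T := fun i hi =>
  (mem_filter.mp hj).2 i ((G.mem_neighborFinset j i).mp hi)

theorem card_bset_le_sum_sum_inv_degree [DecidableEq V] {K : Type*} [Field K] [LinearOrder K]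
    [IsStrictOrderedRing K] (hdeg : ∀ v, 0 < G.degree v) (T : Finset V) :
    ((bset G T).card : K) ≤ ∑ i ∈ T, ∑ j ∈ G.neighborFinset i, 1 / (G.degree j : K) := by
  rw [sum_sum_neighborFinset_eq_sum_card_inter_smul]
  calc ((bset G T).card : K)
      = ∑ j ∈ bset G T, #(T ∩ G.neighborFinset j) • (1 / (G.degree j : K)) := by
        rw [card_eq_sum_ones, Nat.cast_sum]
        refine sum_congr rfl fun j hj => ?_
        rw [inter_eq_right.mpr (G.neighborFinset_subset_of_mem_bset hj),
          card_neighborFinset_eq_degree, nsmul_eq_mul, mul_one_div_cancel (by exact_mod_cast (hdeg j).ne'), Nat.cast_one]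
    _ ≤ ∑ j, #(T ∩ G.neighborFinset j) • (1 / (G.degree j : K)) :=
        sum_le_sum_of_subset_of_nonneg (subset_univ _) fun j _ _ => by positivity

end SimpleGraph

/-- Let `G` be a finite simple undirected connected graph with at least two vertices (so every
vertex has degree at least 1). The vector `φᵖ` with components
`φᵖ_i = -1 + Σ_{j adjacent to i} 1/d_j` belongs to the core of the game `(V, p_G)`: for every
coalition `T ⊆ V`, `Σ_{i ∈ T} φᵖ_i ≥ p_G(T)`, equivalently
`Σ_{i ∈ T} Σ_{j ∈ N({i})} 1/d_j ≥ |B(T)|`. -/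
theorem shapley_powerP_mem_core
    [Fintype V] [DecidableEq V] (G : SimpleGraph V) [DecidableRel G.Adj]
    (hconn : G.Connected) (hcard : 2 ≤ Fintype.card V) (T : Finset V) :
    (powerP G T : ℝ) ≤
        ∑ i ∈ T, (-1 + ∑ j ∈ G.neighborFinset i, (1 : ℝ) / (G.degree j : ℝ)) ∧
      ((bset G T).card : ℝ) ≤
        ∑ i ∈ T, ∑ j ∈ G.neighborFinset i, (1 : ℝ) / (G.degree j : ℝ) := by
  have : Nontrivial V := Fintype.one_lt_card_iff_nontrivial.mp hcard
  have hB := G.card_bset_le_sum_sum_inv_degree (K := ℝ)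
    (fun v => hconn.preconnected.degree_pos_of_nontrivial v) T
  refine ⟨?_, hB⟩
  rw [sum_add_distrib, sum_const, nsmul_eq_mul, powerP]
  push_cast
  linarith
end
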